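/- arXiv:1401.7683 — 3 statements merged into one kernel-verified Lean document; each statement's English description precedes it below -/
import Mathlib

section
/- Let G : U → ℝ be real-analytic on an open neighbourhood U of (0,0) in ℝⁿ × ℝ, y-regular of order d > 1 at (0,0), and set cᵢ(x) := (∂ⁱG/∂yⁱ)(x,0) for 0 ≤ i ≤ d. Assume c_{d−1} ≡ 0 and that for each i < d−1 there is a real-analytic function cᵢ* with cᵢ(x) = x^{α(d−i)}·cᵢ*(x), where α ∈ ℕⁿ, and that c_k*(0) ≠ 0 for some k < d−1. Then H(x,y) := x^{−αd}·G(x, x^α·y) extends to a real-analytic function on a neighbourhood of (0,0) which is y-regular of order at most k at (0,0). -/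
/-!
Subtracting from `G` the terms `cᵢ(x) yⁱ / i!`, `i < d - 1`, of its Taylor expansion in `y` leaves a
function whose `y`-derivatives of order `< d` vanish along `y = 0` (here `c_{d-1} ≡ 0` is used).
Such a function is `y^d · S(x, y)` with `S` analytic, since an analytic function vanishing on
`y = 0` is `y` times an analytic one (divide its power series). Substituting `y ↦ x^α y` turns
`cᵢ(x) (x^α y)ⁱ` into `x^{αd} cᵢ*(x) yⁱ`, so `H(x, y) = ∑_{i < d-1} cᵢ*(x) yⁱ / i! + y^d S(x, x^α y)`.
Its `i`-th `y`-derivative at the origin is `cᵢ*(0)` for `i < d - 1`, and `c_k*(0) ≠ 0` bounds the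
order of `H` by `k`.
-/

/-- The `i`-th partial derivative of `G(x,y)` with respect to `y`. -/
noncomputable def yDeriv {n : ℕ} (G : (Fin n → ℝ) × ℝ → ℝ) (i : ℕ)
    (x : Fin n → ℝ) (y : ℝ) : ℝ :=
  iteratedDeriv i (fun t => G (x, t)) y

/-- `G` is `y`-regular of order `k` at `(x₀, y₀)`. -/
def YRegular {n : ℕ} (G : (Fin n → ℝ) × ℝ → ℝ) (k : ℕ)
    (x₀ : Fin n → ℝ) (y₀ : ℝ) : Prop :=
  yDeriv G k x₀ y₀ ≠ 0 ∧ ∀ j < k, yDeriv G j x₀ y₀ = 0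

open Filter Topology Finset
open scoped Nat

section IteratedDeriv

variable {𝕜 : Type*} [NontriviallyNormedField 𝕜]

theorem iteratedDeriv_fun_pow_mul_zero {g : 𝕜 → 𝕜} {d j : ℕ} (hg : ContDiffAt 𝕜 j g 0) :
    iteratedDeriv j (fun t => t ^ d * g t) 0 =
      if d ≤ j then j.choose d * d ! * iteratedDeriv (j - d) g 0 else 0 := by
  rw [iteratedDeriv_fun_mul (f := (· ^ d)) (contDiffAt_id.pow d) hg]
  simp only [iteratedDeriv_fun_pow_zero, Nat.cast_ite, Nat.cast_zero, mul_ite, ite_mul, mul_zero,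
    zero_mul, sum_ite_eq']
  simp

variable [CharZero 𝕜]

theorem iteratedDeriv_sum_div_factorial_mul_pow_zero (a : ℕ → 𝕜) (m j : ℕ) :
    iteratedDeriv j (fun t => ∑ i ∈ range m, a i / i ! * t ^ i) 0 = if j < m then a j else 0 := by
  rw [iteratedDeriv_fun_sum fun i _ => (contDiff_const.mul (contDiff_id.pow i)).contDiffAt]
  simp only [iteratedDeriv_const_mul_field, iteratedDeriv_fun_pow_zero, Nat.cast_ite,
    Nat.cast_zero, mul_ite, mul_zero, sum_ite_eq]
  simp [Nat.factorial_ne_zero]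

theorem iteratedDeriv_sum_add_pow_mul_zero {g : 𝕜 → 𝕜} {j d : ℕ} (hg : ContDiffAt 𝕜 j g 0)
    (hjd : j < d) (a : ℕ → 𝕜) (m : ℕ) :
    iteratedDeriv j (fun t => ∑ i ∈ range m, a i / i ! * t ^ i + t ^ d * g t) 0 =
      if j < m then a j else 0 := by
  rw [iteratedDeriv_fun_add (f := fun t => ∑ i ∈ range m, a i / i ! * t ^ i)
      (g := fun t => t ^ d * g t) (by fun_prop) ((contDiffAt_id.pow d).mul hg),
    iteratedDeriv_sum_div_factorial_mul_pow_zero, iteratedDeriv_fun_pow_mul_zero hg,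
    if_neg hjd.not_ge, add_zero]

end IteratedDeriv

variable {𝕜 : Type*} [NontriviallyNormedField 𝕜] {E : Type*} [NormedAddCommGroup E]
  [NormedSpace 𝕜 E] {F : Type*} [NormedAddCommGroup F] [NormedSpace 𝕜 F]

namespace FormalMultilinearSeries

/-- Telescoping `w ↦ (w.1, 0)` one slot at a time writes `p (m + 1) w - p (m + 1) (w.1, 0)` as a
sum of terms with `w - (w.1, 0) = w.2 • (0, 1)` in slot `i`; `divSnd p m` collects these terms
with the factor `w.2` removed. -/
noncomputable def divSnd (p : FormalMultilinearSeries 𝕜 (E × 𝕜) F) :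
    FormalMultilinearSeries 𝕜 (E × 𝕜) F := fun m =>
  ∑ i : Fin (m + 1), ((p (m + 1)).compContinuousLinearMap fun j =>
    if i < j then (ContinuousLinearMap.inl 𝕜 E 𝕜).comp (ContinuousLinearMap.fst 𝕜 E 𝕜)
    else ContinuousLinearMap.id 𝕜 (E × 𝕜)).curryMid i (0, 1)

variable (p : FormalMultilinearSeries 𝕜 (E × 𝕜) F)

theorem snd_smul_divSnd_apply (m : ℕ) (w : E × 𝕜) :
    w.2 • p.divSnd m (fun _ => w) = p (m + 1) (fun _ => w) - p (m + 1) (fun _ => (w.1, 0)) := by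
  have h := (p (m + 1)).toMultilinearMap.map_sub_map_piecewise (fun _ => w) (fun _ => (w.1, 0))
    univ
  simp only [piecewise_univ, mem_univ, forall_const, ContinuousMultilinearMap.coe_coe] at h
  rw [h, divSnd, _root_.sum_apply, smul_sum]
  refine sum_congr rfl fun i _ => ?_
  rw [← _root_.smul_apply, ← ContinuousLinearMap.map_smul,
    ContinuousMultilinearMap.curryMid_apply, ContinuousMultilinearMap.compContinuousLinearMap_apply]
  congr 1
  ext j : 1
  rcases eq_or_ne j i with rfl | hji
  · ext <;> simp
  · obtain ⟨k, rfl⟩ := Fin.exists_succAbove_eq hji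
    rw [Fin.insertNth_apply_succAbove]
    rcases lt_or_gt_of_ne hji with h | h <;> simp [h, h.not_gt, h.ne]

theorem norm_divSnd_le (m : ℕ) : ‖p.divSnd m‖ ≤ (m + 1) * ‖p (m + 1)‖ := by
  have hL (i j : Fin (m + 1)) : ‖if i < j then (ContinuousLinearMap.inl 𝕜 E 𝕜).comp
      (ContinuousLinearMap.fst 𝕜 E 𝕜) else ContinuousLinearMap.id 𝕜 (E × 𝕜)‖ ≤ 1 := by
    split_ifs
    · exact (ContinuousLinearMap.opNorm_comp_le _ _).trans (mul_le_one₀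
        (ContinuousLinearMap.norm_inl_le_one 𝕜 E 𝕜) (norm_nonneg _)
        (ContinuousLinearMap.norm_fst_le 𝕜 E 𝕜))
    · exact ContinuousLinearMap.norm_id_le
  have he : ‖((0, 1) : E × 𝕜)‖ = 1 := by simp
  calc ‖p.divSnd m‖ ≤ ∑ i : Fin (m + 1), ‖p (m + 1)‖ := by
        refine (norm_sum_le _ _).trans (sum_le_sum fun i _ => ?_)
        refine ((ContinuousLinearMap.le_opNorm _ _).trans (by rw [he, mul_one])).trans ?_
        rw [ContinuousMultilinearMap.norm_curryMid]
        refine (ContinuousMultilinearMap.norm_compContinuousLinearMap_le _ _).trans ?_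
        exact mul_le_of_le_one_right (norm_nonneg _)
          (prod_le_one (fun _ _ => norm_nonneg _) fun j _ => hL i j)
    _ = (m + 1) * ‖p (m + 1)‖ := by simp

theorem radius_le_radius_divSnd : p.radius ≤ p.divSnd.radius := by
  refine ENNReal.le_of_forall_nnreal_lt fun r hr => ?_
  obtain ⟨r', hrr', hr'⟩ := ENNReal.lt_iff_exists_nnreal_btwn.1 hr
  obtain ⟨C, -, hC⟩ := p.norm_mul_pow_le_of_lt_radius hr'
  have hr'0 : (0 : ℝ) < r' := NNReal.coe_pos.2 (ENNReal.coe_pos.1 (bot_le.trans_lt hrr'))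
  have hq : (r : ℝ) / r' < 1 := (div_lt_one hr'0).2 (mod_cast ENNReal.coe_lt_coe.1 hrr')
  have hlim : Tendsto (fun m : ℕ => ((m : ℝ) + 1) * ((r : ℝ) / r') ^ m) atTop (𝓝 0) := by
    simpa [add_mul] using (tendsto_self_mul_const_pow_of_lt_one (by positivity) hq).add
      (tendsto_pow_atTop_nhds_zero_of_lt_one (by positivity) hq)
  refine p.divSnd.le_radius_of_isBigO (Asymptotics.IsBigO.trans ?_ (hlim.isBigO_one ℝ))
  refine Asymptotics.IsBigO.of_bound (C / r') (Eventually.of_forall fun m => ?_)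
  rw [Real.norm_of_nonneg (by positivity), Real.norm_of_nonneg (by positivity)]
  calc ‖p.divSnd m‖ * r ^ m ≤ (m + 1) * ‖p (m + 1)‖ * r ^ m := by
        gcongr; exact p.norm_divSnd_le m
    _ = ((m : ℝ) + 1) * ((r : ℝ) / r') ^ m * (‖p (m + 1)‖ * r' ^ (m + 1)) / r' := by
      rw [div_pow, pow_succ]; field_simp
    _ ≤ ((m : ℝ) + 1) * ((r : ℝ) / r') ^ m * C / r' := by gcongr; exact hC _
    _ = C / r' * (((m : ℝ) + 1) * ((r : ℝ) / r') ^ m) := by ring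

end FormalMultilinearSeries

theorem AnalyticAt.exists_eq_snd_smul [CompleteSpace F] {f : E × 𝕜 → F} {x₀ : E}
    (hf : AnalyticAt 𝕜 f (x₀, 0)) (h0 : ∀ᶠ x in 𝓝 x₀, f (x, 0) = 0) :
    ∃ g : E × 𝕜 → F, AnalyticAt 𝕜 g (x₀, 0) ∧ ∀ᶠ z in 𝓝 (x₀, 0), f z = z.2 • g z := by
  obtain ⟨p, r, hp⟩ := hf
  have hrq : r ≤ p.divSnd.radius := hp.r_le.trans p.radius_le_radius_divSnd
  refine ⟨fun z => p.divSnd.sum (z - (x₀, 0)), ?_, ?_⟩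
  · simpa using ((p.divSnd.hasFPowerSeriesOnBall (hp.r_pos.trans_le hrq)).comp_sub
      (x₀, 0)).analyticAt
  filter_upwards [Metric.eball_mem_nhds (x₀, (0 : 𝕜)) hp.r_pos,
    continuousAt_fst.eventually h0] with z hz hz0
  set w := z - (x₀, 0)
  have hw : w ∈ Metric.eball 0 r := by simpa [w, edist_eq_enorm_sub] using hz
  have hπw : ((w.1, 0) : E × 𝕜) ∈ Metric.eball 0 r := by
    rw [mem_eball_zero_iff] at hw ⊢
    refine lt_of_le_of_lt (enorm_le_iff_norm_le.2 ?_) hw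
    simp [Prod.norm_def]
  have hzw : (x₀, (0 : 𝕜)) + w = z := add_sub_cancel _ _
  have hπz : (x₀, (0 : 𝕜)) + (w.1, 0) = (z.1, 0) := by ext <;> simp [w]
  have hw2 : w.2 = z.2 := by simp [w]
  -- the constant terms of the two expansions cancel
  have hdiff := (hp.hasSum hw).sub (hp.hasSum hπw)
  rw [← hasSum_nat_add_iff' 1] at hdiff
  simp only [hzw, hπz, hz0, sub_zero, range_one, sum_singleton, sub_self,
    Subsingleton.elim (fun _ : Fin 0 => w) (fun _ => (w.1, 0)), ← p.snd_smul_divSnd_apply] at hdiff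
  exact hw2 ▸ hdiff.unique ((p.divSnd.hasSum (Metric.eball_subset_eball hrq hw)).const_smul w.2)

section

variable [CompleteSpace 𝕜] [CharZero 𝕜]

theorem AnalyticAt.exists_eq_snd_pow_mul {f : E × 𝕜 → 𝕜} {x₀ : E} (hf : AnalyticAt 𝕜 f (x₀, 0))
    {d : ℕ} (h : ∀ j < d, ∀ᶠ x in 𝓝 x₀, iteratedDeriv j (fun t => f (x, t)) 0 = 0) :
    ∃ g : E × 𝕜 → 𝕜, AnalyticAt 𝕜 g (x₀, 0) ∧ ∀ᶠ z in 𝓝 (x₀, 0), f z = z.2 ^ d * g z := by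
  induction d with
  | zero => exact ⟨f, hf, Eventually.of_forall fun z => by simp⟩
  | succ d ih =>
    obtain ⟨g, hg, hfg⟩ := ih fun j hj => h j (Nat.lt_succ_of_lt hj)
    have hg0 : ∀ᶠ x in 𝓝 x₀, g (x, 0) = 0 := by
      filter_upwards [(hfg.and hg.eventually_analyticAt).curry_nhds, h d d.lt_succ_self]
        with x hx hxd
      have hslice : iteratedDeriv d (fun t => f (x, t)) 0 = d ! * g (x, 0) := by
        rw [Filter.EventuallyEq.iteratedDeriv_eq d (hx.mono fun t ht => ht.1),
          iteratedDeriv_fun_pow_mul_zero hx.self_of_nhds.2.curry_right.contDiffAt]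
        simp
      simpa [hxd, Nat.factorial_ne_zero] using hslice
    obtain ⟨g', hg', hgg'⟩ := hg.exists_eq_snd_smul hg0
    refine ⟨g', hg', ?_⟩
    filter_upwards [hfg, hgg'] with z h1 h2
    rw [h1, h2, smul_eq_mul, pow_succ, mul_assoc]

theorem AnalyticAt.exists_eq_sum_add_snd_pow_mul {f : E × 𝕜 → 𝕜} {x₀ : E}
    (hf : AnalyticAt 𝕜 f (x₀, 0)) {m d : ℕ} {b : ℕ → E → 𝕜} (hb : ∀ i < m, AnalyticAt 𝕜 (b i) x₀)
    (hfb : ∀ j < d, ∀ᶠ x in 𝓝 x₀,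
      iteratedDeriv j (fun t => f (x, t)) 0 = if j < m then b j x else 0) :
    ∃ g : E × 𝕜 → 𝕜, AnalyticAt 𝕜 g (x₀, 0) ∧
      ∀ᶠ z in 𝓝 (x₀, 0), f z = ∑ i ∈ range m, b i z.1 / i ! * z.2 ^ i + z.2 ^ d * g z := by
  set P : E × 𝕜 → 𝕜 := fun z => ∑ i ∈ range m, b i z.1 / i ! * z.2 ^ i
  have hP : AnalyticAt 𝕜 P (x₀, 0) := by
    refine Finset.analyticAt_fun_sum _ fun i hi => ?_
    exact (((hb i (mem_range.1 hi)).comp analyticAt_fst).div_const).mul (analyticAt_snd.pow i)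
  obtain ⟨g, hg, hfg⟩ := (hf.sub hP).exists_eq_snd_pow_mul (d := d) fun j hj => by
    filter_upwards [hf.eventually_analyticAt.curry_nhds, hfb j hj] with x hx hxj
    have hPx : ContDiffAt 𝕜 j (fun t => P (x, t)) 0 := by
      simp only [P]
      fun_prop
    rw [Pi.sub_def, iteratedDeriv_fun_sub hx.self_of_nhds.curry_right.contDiffAt hPx, hxj]
    exact sub_eq_zero.2 (iteratedDeriv_sum_div_factorial_mul_pow_zero (fun i => b i x) m j).symm
  exact ⟨g, hg, hfg.mono fun z hz => by rw [← hz, Pi.sub_apply, add_sub_cancel]⟩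

theorem AnalyticAt.exists_pow_mul_eq_rescale {f : E × 𝕜 → 𝕜} {x₀ : E}
    (hf : AnalyticAt 𝕜 f (x₀, 0)) {a : E → 𝕜} (ha : AnalyticAt 𝕜 a x₀) {m d : ℕ} (hmd : m ≤ d)
    {c : ℕ → E → 𝕜} (hc : ∀ i < m, AnalyticAt 𝕜 (c i) x₀)
    (hfc : ∀ j < d, ∀ᶠ x in 𝓝 x₀,
      iteratedDeriv j (fun t => f (x, t)) 0 = if j < m then a x ^ (d - j) * c j x else 0) :
    ∃ H : E × 𝕜 → 𝕜, AnalyticAt 𝕜 H (x₀, 0) ∧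
      (∀ᶠ z in 𝓝 (x₀, 0), a z.1 ^ d * H z = f (z.1, a z.1 * z.2)) ∧
      ∀ j < m, iteratedDeriv j (fun t => H (x₀, t)) 0 = c j x₀ := by
  obtain ⟨S, hS, hfS⟩ := hf.exists_eq_sum_add_snd_pow_mul
    (b := fun i x => a x ^ (d - i) * c i x) (fun i hi => (ha.pow _).mul (hc i hi)) hfc
  set ψ : E × 𝕜 → E × 𝕜 := fun z => (z.1, a z.1 * z.2)
  have hψ : AnalyticAt 𝕜 ψ (x₀, 0) :=
    analyticAt_fst.prod ((ha.comp analyticAt_fst).mul analyticAt_snd)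
  have hψ0 : ψ (x₀, 0) = (x₀, 0) := by simp [ψ]
  have hSψ : AnalyticAt 𝕜 (fun z => S (ψ z)) (x₀, 0) := hS.comp_of_eq hψ hψ0
  refine ⟨fun z => ∑ i ∈ range m, c i z.1 / i ! * z.2 ^ i + z.2 ^ d * S (ψ z), ?_, ?_, ?_⟩
  · refine (Finset.analyticAt_fun_sum _ fun i hi => ?_).add ((analyticAt_snd.pow d).mul hSψ)
    exact ((hc i (mem_range.1 hi)).comp analyticAt_fst).div_const.mul (analyticAt_snd.pow i)
  · have hψt : Tendsto ψ (𝓝 (x₀, 0)) (𝓝 (x₀, 0)) := by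
      simpa only [hψ0] using hψ.continuousAt.tendsto
    filter_upwards [hψt.eventually hfS] with z hz
    rw [hz]
    simp only [ψ, mul_add, mul_sum]
    congr 1
    · refine sum_congr rfl fun i hi => ?_
      rw [← pow_sub_mul_pow (a z.1) (by grind : i ≤ d)]
      ring
    · ring
  · intro j hj
    have hSψx : ContDiffAt 𝕜 j (fun t => S (ψ (x₀, t))) 0 := hSψ.curry_right.contDiffAt
    exact (iteratedDeriv_sum_add_pow_mul_zero hSψx (by omega) (fun i => c i x₀) m).trans
      (if_pos hj)

end

theorem exists_yRegular_le {n : ℕ} {H : (Fin n → ℝ) × ℝ → ℝ} {k : ℕ} {x₀ : Fin n → ℝ} {y₀ : ℝ}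
    (hk : yDeriv H k x₀ y₀ ≠ 0) : ∃ k' ≤ k, YRegular H k' x₀ y₀ := by
  classical
  have hex : ∃ j, yDeriv H j x₀ y₀ ≠ 0 := ⟨k, hk⟩
  exact ⟨Nat.find hex, Nat.find_min' hex hk, Nat.find_spec hex,
    fun j hj => not_not.1 (Nat.find_min hex hj)⟩

theorem lemma_machine_general
    (n : ℕ) (U : Set ((Fin n → ℝ) × ℝ)) (hU : U ∈ nhds ((0, 0) : (Fin n → ℝ) × ℝ))
    (G : (Fin n → ℝ) × ℝ → ℝ) (hG : AnalyticOnNhd ℝ G U)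
    (d : ℕ) (α : Fin n → ℕ)
    (hcd1 : ∀ᶠ x in nhds (0 : Fin n → ℝ), yDeriv G (d - 1) x 0 = 0)
    (cstar : ℕ → (Fin n → ℝ) → ℝ)
    (hcstar : ∀ i < d - 1, ∀ᶠ x in nhds (0 : Fin n → ℝ),
      AnalyticAt ℝ (cstar i) x ∧
        yDeriv G i x 0 = (∏ j, x j ^ ((d - i) * α j)) * cstar i x)
    (k : ℕ) (hk : k < d - 1) (hk0 : cstar k 0 ≠ 0) :
    ∃ V ∈ nhds ((0, 0) : (Fin n → ℝ) × ℝ), ∃ H : (Fin n → ℝ) × ℝ → ℝ,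
      AnalyticOnNhd ℝ H V ∧
      (∀ p ∈ V, (∏ j, p.1 j ^ (d * α j)) * H p = G (p.1, (∏ j, p.1 j ^ α j) * p.2)) ∧
      ∃ k' ≤ k, YRegular H k' 0 0 := by
  set xα : (Fin n → ℝ) → ℝ := fun x => ∏ j, x j ^ α j
  have hxα (m : ℕ) (x : Fin n → ℝ) : ∏ j, x j ^ (m * α j) = xα x ^ m := by
    simp only [xα, ← prod_pow, ← pow_mul, mul_comm]
  have hGc : ∀ j < d, ∀ᶠ x in 𝓝 0, yDeriv G j x 0 =
      if j < d - 1 then xα x ^ (d - j) * cstar j x else 0 := by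
    intro j hj
    by_cases hjd : j < d - 1
    · filter_upwards [hcstar j hjd] with x hx
      rw [if_pos hjd, ← hxα]
      exact hx.2
    · obtain rfl : j = d - 1 := by omega
      simpa [hjd] using hcd1
  have hxαan : AnalyticAt ℝ xα 0 :=
    Finset.analyticAt_fun_prod _ fun j _ =>
      ((ContinuousLinearMap.proj j : (Fin n → ℝ) →L[ℝ] ℝ).analyticAt 0).pow (α j)
  obtain ⟨H, hH, hHG, hHc⟩ := (hG _ (mem_of_mem_nhds hU)).exists_pow_mul_eq_rescale hxαan
    (Nat.sub_le d 1) (fun i hi => (hcstar i hi).self_of_nhds.1) hGc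
  refine ⟨{p | AnalyticAt ℝ H p ∧ (∏ j, p.1 j ^ (d * α j)) * H p = G (p.1, xα p.1 * p.2)}, ?_, H,
    fun p hp => hp.1, fun p hp => hp.2, exists_yRegular_le (by rwa [yDeriv, hHc k hk])⟩
  filter_upwards [hH.eventually_analyticAt, hHG] with p hHp hGp
  exact ⟨hHp, by rwa [hxα]⟩

/-- Lemma 4.4 (first part, analytic case): with `cᵢ(x) = (∂ⁱG/∂yⁱ)(x,0)`, if
`c_{d-1} ≡ 0`, each `cᵢ` (`i < d-1`) is divisible by `x^{α(d-i)}` with quotient `cᵢ*`,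
and `c_k*(0) ≠ 0` for some `k < d-1`, then `H(x,y) = x^{-αd}·G(x, x^α y)` extends to an
analytic function near `(0,0)` which is `y`-regular of order at most `k` at `(0,0)`. -/
theorem lemma_machine
    (n : ℕ) (U : Set ((Fin n → ℝ) × ℝ)) (hU : U ∈ nhds ((0, 0) : (Fin n → ℝ) × ℝ))
    (G : (Fin n → ℝ) × ℝ → ℝ) (hG : AnalyticOnNhd ℝ G U)
    (d : ℕ) (hd : 1 < d) (hreg : YRegular G d 0 0)
    (α : Fin n → ℕ)
    (hcd1 : ∀ᶠ x in nhds (0 : Fin n → ℝ), yDeriv G (d - 1) x 0 = 0)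
    (cstar : ℕ → (Fin n → ℝ) → ℝ)
    (hcstar : ∀ i < d - 1, ∀ᶠ x in nhds (0 : Fin n → ℝ),
      AnalyticAt ℝ (cstar i) x ∧
        yDeriv G i x 0 = (∏ j, x j ^ ((d - i) * α j)) * cstar i x)
    (k : ℕ) (hk : k < d - 1) (hk0 : cstar k 0 ≠ 0) :
    ∃ V ∈ nhds ((0, 0) : (Fin n → ℝ) × ℝ), ∃ H : (Fin n → ℝ) × ℝ → ℝ,
      AnalyticOnNhd ℝ H V ∧
      (∀ p ∈ V, (∏ j, p.1 j ^ (d * α j)) * H p = G (p.1, (∏ j, p.1 j ^ α j) * p.2)) ∧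
      ∃ k' ≤ k, YRegular H k' 0 0 :=
  lemma_machine_general n U hU G hG d α hcd1 cstar hcstar k hk hk0
end

section
/- Let U be a connected open neighbourhood of 0 in ℝⁿ, γ ∈ ℚ₊ⁿ with γ = (γ₁,…,γₙ), and let h : U → ℝ be a function such that g₁(x) := x^{−γ}·h(x) is defined on {x ∈ U : x^γ ≠ 0}, |g₁| extends continuously to 0 with nonzero limit L ≠ 0, and such that for each sufficiently small σ > 0 the function t ↦ h(t, σ, …, σ) is real-analytic on an interval around 0. Then γ₁ ∈ ℕ. -/
/-!
Fix a small `σ > 0` and restrict `h` to the coordinate line `β(t) = (t, σ, …, σ)`. Along it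
`x^γ = |t|^{γ₁} · K` with `K = σ^{γ₂ + ⋯ + γₙ} > 0`, and for `σ` small the whole line near
`t = 0` lies where `|h / x^γ|` is pinched between two positive constants; hence
`h ∘ β =Θ t^{γ₁}` as `t → 0⁺`. But an analytic function that does not vanish identically is
`Θ(t^m)` with `m` its order of vanishing, and `t^a =Θ t^b` as `t → 0⁺` forces `a = b`.
-/

open Filter Topology

/-- The "monomial" `∏ i x i ^ γ i` with rational exponents (via real powers of `|x i|`). -/
noncomputable def rmon {n : ℕ} (γ : Fin n → ℚ) (x : Fin n → ℝ) : ℝ :=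
  ∏ i, |x i| ^ ((γ i : ℝ))

open Asymptotics Set

theorem eq_of_rpow_isTheta_rpow_nhdsGT_zero {a b : ℝ}
    (h : (fun t : ℝ => t ^ a) =Θ[𝓝[>] 0] fun t => t ^ b) : a = b := by
  wlog hab : a < b generalizing a b
  · rcases (not_lt.mp hab).lt_or_eq with hba | hba
    exacts [(this h.symm hba).symm, hba.symm]
  have hsmall : (fun t : ℝ => t ^ (b - a)) =o[𝓝[>] 0] fun _ => (1 : ℝ) := by
    have hpos : 0 < b - a := sub_pos.mpr hab
    rw [isLittleO_one_iff]
    simpa [Real.zero_rpow hpos.ne'] using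
      (Real.continuousAt_rpow_const 0 _ (Or.inr hpos.le)).tendsto.mono_left nhdsWithin_le_nhds
  have hlittle : (fun t : ℝ => t ^ b) =o[𝓝[>] 0] fun t => t ^ a := by
    refine (hsmall.mul_isBigO (isBigO_refl (fun t : ℝ => t ^ a) _)).congr' ?_ (by simp)
    filter_upwards [self_mem_nhdsWithin] with t ht
    rw [← Real.rpow_add ht, sub_add_cancel]
  have hne : ∀ᶠ t in 𝓝[>] (0 : ℝ), t ^ b ≠ 0 :=
    eventually_nhdsWithin_of_forall fun t ht => (Real.rpow_pos_of_pos ht b).ne'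
  exact absurd h.isBigO (hlittle.not_isBigO hne.frequently)

theorem AnalyticAt.isTheta_pow_analyticOrderNatAt {𝕜 E : Type*} [NontriviallyNormedField 𝕜]
    [NormedAddCommGroup E] [NormedSpace 𝕜 E] {f : 𝕜 → E} {z₀ : 𝕜} (hf : AnalyticAt 𝕜 f z₀)
    (hfin : analyticOrderAt f z₀ ≠ ⊤) :
    f =Θ[𝓝 z₀] fun z => (z - z₀) ^ analyticOrderNatAt f z₀ := by
  obtain ⟨g, hg, hg0, hfg⟩ := hf.analyticOrderAt_ne_top.mp hfin
  have hg1 : g =Θ[𝓝 z₀] fun _ => (1 : 𝕜) := by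
    refine ⟨isBigO_const_of_tendsto hg.continuousAt one_ne_zero,
      (isBigO_const_left_iff_pos_le_norm one_ne_zero).mpr ⟨‖g z₀‖ / 2, by positivity, ?_⟩⟩
    exact (hg.continuousAt.norm.eventually
      (lt_mem_nhds (half_lt_self (norm_pos_iff.mpr hg0)))).mono fun _ => le_of_lt
  simpa using
    hfg.trans_isTheta ((isTheta_refl (fun z => (z - z₀) ^ analyticOrderNatAt f z₀) _).smul hg1)

theorem AnalyticAt.exists_nat_eq_of_isTheta_rpow {f : ℝ → ℝ} {a : ℝ} (hf : AnalyticAt ℝ f 0)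
    (h : f =Θ[𝓝[>] 0] fun t => t ^ a) : ∃ m : ℕ, a = m := by
  have hfin : analyticOrderAt f 0 ≠ ⊤ := by
    intro htop
    have hzero := (h.eq_zero_iff.and ((analyticOrderAt_eq_top.mp htop).filter_mono
      nhdsWithin_le_nhds)).and self_mem_nhdsWithin
    obtain ⟨t, ⟨hiff, hft⟩, ht⟩ := hzero.exists
    exact (Real.rpow_pos_of_pos ht a).ne' (hiff.mp hft)
  refine ⟨analyticOrderNatAt f 0, eq_of_rpow_isTheta_rpow_nhdsGT_zero ?_⟩
  simpa using h.symm.trans ((hf.isTheta_pow_analyticOrderNatAt hfin).mono nhdsWithin_le_nhds)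

theorem isTheta_of_abs_div_mem_Icc {α : Type*} {l : Filter α} {u v : α → ℝ} {c₁ c₂ : ℝ}
    (hc₁ : 0 < c₁) (h : ∀ᶠ x in l, v x ≠ 0 ∧ |u x / v x| ∈ Icc c₁ c₂) : u =Θ[l] v := by
  refine ⟨IsBigO.of_bound c₂ (h.mono fun x ⟨hv, _, hle⟩ => ?_),
    IsBigO.of_bound c₁⁻¹ (h.mono fun x ⟨hv, hge, _⟩ => ?_)⟩
  · rwa [abs_div, div_le_iff₀ (abs_pos.mpr hv)] at hle
  · rw [abs_div, le_div_iff₀ (abs_pos.mpr hv)] at hge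
    rw [Real.norm_eq_abs, Real.norm_eq_abs, inv_mul_eq_div, le_div_iff₀ hc₁]
    linarith

theorem rmon_pos {n : ℕ} (γ : Fin n → ℚ) {x : Fin n → ℝ} (hx : ∀ i, x i ≠ 0) : 0 < rmon γ x :=
  Finset.prod_pos fun i _ => Real.rpow_pos_of_pos (abs_pos.mpr (hx i)) _

theorem rmon_update_pos {n : ℕ} (γ : Fin n → ℚ) {x : Fin n → ℝ} {j : Fin n}
    (hx : ∀ i ≠ j, x i ≠ 0) {t : ℝ} (ht : t ≠ 0) : 0 < rmon γ (Function.update x j t) :=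
  rmon_pos γ fun i => by rcases eq_or_ne i j with rfl | hi <;> simp [*]

theorem rmon_update {n : ℕ} (γ : Fin n → ℚ) (x : Fin n → ℝ) (j : Fin n) (t : ℝ) :
    rmon γ (Function.update x j t) =
      |t| ^ (γ j : ℝ) * ∏ i ∈ Finset.univ.erase j, |x i| ^ (γ i : ℝ) := by
  rw [rmon, ← Finset.mul_prod_erase _ _ (Finset.mem_univ j), Function.update_self]
  congr 1
  exact Finset.prod_congr rfl fun i hi => by rw [Function.update_of_ne (Finset.ne_of_mem_erase hi)]

theorem isTheta_rpow_of_abs_div_rmon_update_mem_Icc {n : ℕ} (γ : Fin n → ℚ)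
    {h : (Fin n → ℝ) → ℝ} {x : Fin n → ℝ} {j : Fin n} (hx : ∀ i ≠ j, x i ≠ 0) {c₁ c₂ : ℝ}
    (hc₁ : 0 < c₁) (hbd : ∀ᶠ t in 𝓝[>] 0,
      |h (Function.update x j t) / rmon γ (Function.update x j t)| ∈ Icc c₁ c₂) :
    (fun t => h (Function.update x j t)) =Θ[𝓝[>] 0] fun t => t ^ (γ j : ℝ) := by
  set K := ∏ i ∈ Finset.univ.erase j, |x i| ^ (γ i : ℝ)
  have hK : 0 < K := Finset.prod_pos fun i hi =>
    Real.rpow_pos_of_pos (abs_pos.mpr (hx i (Finset.ne_of_mem_erase hi))) _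
  have hΘ : (fun t => h (Function.update x j t)) =Θ[𝓝[>] 0]
      fun t => rmon γ (Function.update x j t) := by
    refine isTheta_of_abs_div_mem_Icc (c₂ := c₂) hc₁ ?_
    filter_upwards [hbd, self_mem_nhdsWithin] with t hq ht
    exact ⟨(rmon_update_pos γ hx (ne_of_gt ht)).ne', hq⟩
  refine (isTheta_const_mul_right hK.ne').mp (hΘ.trans_eventuallyEq ?_)
  filter_upwards [self_mem_nhdsWithin] with t (ht : 0 < t)
  rw [rmon_update, abs_of_pos ht, mul_comm]

theorem Filter.Eventually.eventually_update_const {X ι : Type*} [TopologicalSpace X]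
    [DecidableEq ι] {a : X} {P : (ι → X) → Prop} (hP : ∀ᶠ x in 𝓝 (fun _ => a), P x) (j : ι) :
    ∀ᶠ σ in 𝓝 a, ∀ᶠ t in 𝓝 a, P (Function.update (fun _ => σ) j t) := by
  have hcont : Continuous fun p : X × X => Function.update (fun _ => p.1) j p.2 := by fun_prop
  have hP' := hcont.continuousAt (x := (a, a)) |>.eventually (by simpa using hP)
  exact (nhds_prod_eq (x := a) (y := a) ▸ hP').curry

theorem first_exponent_is_integer_general
    (n : ℕ) (hn : 0 < n)
    (U : Set (Fin n → ℝ)) (hUopen : IsOpen U)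
    (hU0 : (0 : Fin n → ℝ) ∈ U)
    (γ : Fin n → ℚ)
    (h : (Fin n → ℝ) → ℝ) (L : ℝ) (hL : L ≠ 0)
    (hlim : Tendsto (fun x => |h x / rmon γ x|)
      (nhdsWithin (0 : Fin n → ℝ) {x ∈ U | rmon γ x ≠ 0}) (nhds L))
    (hanal : ∃ σ₀ > (0 : ℝ), ∀ σ : ℝ, 0 < σ → σ < σ₀ →
      ∃ δ > (0 : ℝ), AnalyticOnNhd ℝ
        (fun t : ℝ => h (fun i => if (i : ℕ) = 0 then t else σ)) (Set.Ioo (-δ) δ)) :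
    ∃ m : ℕ, γ ⟨0, hn⟩ = (m : ℚ) := by
  set j : Fin n := ⟨0, hn⟩
  have hline : ∀ σ t : ℝ, (fun i : Fin n => if (i : ℕ) = 0 then t else σ) =
      Function.update (fun _ => σ) j t := fun σ t => by
    funext i
    simp [j, Function.update_apply, Fin.ext_iff]
  -- The filter in `hlim` may be trivial, so `0 < L` need not hold; `0 < |L|` does.
  have hL0 : 0 < |L| := abs_pos.mpr hL
  have hnear : ∀ᶠ x in 𝓝 0, x ∈ U ∧ (x ∈ {x ∈ U | rmon γ x ≠ 0} →
      |h x / rmon γ x| ∈ Icc (|L| / 2) (2 * |L|)) := by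
    refine (hUopen.eventually_mem hU0).and (eventually_nhdsWithin_iff.mp ?_)
    exact (hlim.abs.eventually (Icc_mem_nhds (half_lt_self hL0) (lt_two_mul_self hL0))).mono
      fun x hx => by rwa [abs_abs] at hx
  obtain ⟨σ₀, hσ₀, hA⟩ := hanal
  obtain ⟨σ, hσnear, hσ, hσσ₀⟩ : ∃ σ, (∀ᶠ t in 𝓝 0, _) ∧ 0 < σ ∧ σ < σ₀ :=
    (((hnear.eventually_update_const j).filter_mono nhdsWithin_le_nhds).and
      (Ioo_mem_nhdsGT hσ₀)).exists
  obtain ⟨δ, hδ, hAn⟩ := hA σ hσ hσσ₀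
  have hf : AnalyticAt ℝ (fun t => h (Function.update (fun _ => σ) j t)) 0 := by
    simpa only [hline] using hAn 0 ⟨by linarith, hδ⟩
  have hΘ : (fun t => h (Function.update (fun _ => σ) j t)) =Θ[𝓝[>] 0]
      fun t => t ^ (γ j : ℝ) := by
    refine isTheta_rpow_of_abs_div_rmon_update_mem_Icc γ (fun _ _ => hσ.ne') (c₂ := 2 * |L|)
      (half_pos hL0) ?_
    filter_upwards [hσnear.filter_mono nhdsWithin_le_nhds, self_mem_nhdsWithin]
      with t ⟨hU, hq⟩ (ht : 0 < t)
    exact hq ⟨hU, (rmon_update_pos γ (fun _ _ => hσ.ne') ht.ne').ne'⟩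
  obtain ⟨m, hm⟩ := hf.exists_nat_eq_of_isTheta_rpow hΘ
  exact ⟨m, by exact_mod_cast hm⟩

/-- Case I integrality argument: if `g₁(x) = x^{-γ}·h(x)` and `|g₁|` extends continuously
to `0` with nonzero limit, and `t ↦ h(t, σ, …, σ)` is real-analytic near `t = 0` for all
small `σ > 0`, then the first rational exponent `γ₁` is a nonnegative integer. -/
theorem first_exponent_is_integer
    (n : ℕ) (hn : 0 < n)
    (U : Set (Fin n → ℝ)) (hUopen : IsOpen U) (hUconn : IsConnected U)
    (hU0 : (0 : Fin n → ℝ) ∈ U)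
    (γ : Fin n → ℚ) (hγ : ∀ i, 0 ≤ γ i)
    (h : (Fin n → ℝ) → ℝ) (L : ℝ) (hL : L ≠ 0)
    (hlim : Tendsto (fun x => |h x / rmon γ x|)
      (nhdsWithin (0 : Fin n → ℝ) {x ∈ U | rmon γ x ≠ 0}) (nhds L))
    (hanal : ∃ σ₀ > (0 : ℝ), ∀ σ : ℝ, 0 < σ → σ < σ₀ →
      ∃ δ > (0 : ℝ), AnalyticOnNhd ℝ
        (fun t : ℝ => h (fun i => if (i : ℕ) = 0 then t else σ)) (Set.Ioo (-δ) δ)) :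
    ∃ m : ℕ, γ ⟨0, hn⟩ = (m : ℚ) :=
  first_exponent_is_integer_general n hn U hUopen hU0 γ h L hL hlim hanal
end

section
/- With H as in the previous statement, assume additionally that α ≠ 0, that the coefficient c_{d−1}* ≡ 0, and that ρ extends C^∞ to a neighbourhood of {0} × ℝ in the appropriate sense with ρ(0,0) ≠ 0. Then for every y₀ ≠ 0, (∂^{d−1}H/∂y^{d−1})(x,y) = c_d(x)·y·τ(x, x^α·y) for (x,y) near (0,y₀), where τ is C^∞ with τ(0,0) ≠ 0; in particular (∂^{d−1}H/∂y^{d−1})(0,y₀) ≠ 0, so H is y-regular of order at most d−1 at (0,y₀). -/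
open Metric Finset

noncomputable def sigAux (n d : ℕ) (ρ : (Fin n → ℝ) × ℝ → ℝ) : ℕ → ((Fin n → ℝ) × ℝ → ℝ)
  | 0 => ρ
  | (k+1) => fun p => ((d - k : ℕ) : ℝ) * sigAux n d ρ k p +
      p.2 * (fderiv ℝ (sigAux n d ρ k) p) (0, 1)

theorem sigAux_smooth (n d : ℕ) (ρ : (Fin n → ℝ) × ℝ → ℝ)
    (W : Set ((Fin n → ℝ) × ℝ)) (hW : IsOpen W) (hρ : ContDiffOn ℝ (⊤ : ℕ∞) ρ W) :
    ∀ k, ContDiffOn ℝ (⊤ : ℕ∞) (sigAux n d ρ k) W := by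
  intro k
  induction k with
  | zero => exact hρ
  | succ k ih =>
    have h1 : ContDiffOn ℝ (⊤ : ℕ∞) (fun p => (fderiv ℝ (sigAux n d ρ k) p) ((0 : Fin n → ℝ), (1:ℝ))) W :=
      (ih.fderiv_of_isOpen hW (by simp)).clm_apply contDiffOn_const
    exact (contDiffOn_const.mul ih).add ((contDiff_snd.contDiffOn).mul h1)

theorem sigAux_ne_zero (n d : ℕ) (ρ : (Fin n → ℝ) × ℝ → ℝ) (hρ0 : ρ (0, 0) ≠ 0) :
    ∀ k, k ≤ d - 1 → sigAux n d ρ k ((0 : Fin n → ℝ), (0:ℝ)) ≠ 0 := by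
  intro k
  induction k with
  | zero => intro _; exact hρ0
  | succ k ih =>
    intro hk
    have h1 : sigAux n d ρ (k+1) ((0 : Fin n → ℝ), (0:ℝ)) =
        ((d - k : ℕ) : ℝ) * sigAux n d ρ k ((0 : Fin n → ℝ), (0:ℝ)) := by
      simp [sigAux]
    rw [h1]
    exact mul_ne_zero (by exact_mod_cast (by omega : (d - k : ℕ) ≠ 0)) (ih (by omega))

theorem chainAux {n : ℕ} (σ : (Fin n → ℝ) × ℝ → ℝ) (x : Fin n → ℝ) (c y : ℝ)
    (hσ : DifferentiableAt ℝ σ (x, c * y)) :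
    HasDerivAt (fun y' => σ (x, c * y')) (c * (fderiv ℝ σ (x, c * y)) (0, 1)) y := by
  have hg : HasDerivAt (fun y' : ℝ => ((x, c * y') : (Fin n → ℝ) × ℝ)) ((0 : Fin n → ℝ), c) y :=
    (hasDerivAt_const y x).prodMk (by simpa using (hasDerivAt_id y).const_mul c)
  have h := hσ.hasFDerivAt.comp_hasDerivAt y hg
  refine h.congr_deriv ?_
  have he : ((0 : Fin n → ℝ), c) = c • ((0 : Fin n → ℝ), (1:ℝ)) := by simp
  rw [he, map_smul, smul_eq_mul]

theorem prodBoundAux {n : ℕ} (α : Fin n → ℕ) (hα : α ≠ 0) (x : Fin n → ℝ) (hx : ‖x‖ ≤ 1) :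
    |∏ j, x j ^ α j| ≤ ‖x‖ := by
  obtain ⟨j, hj⟩ := Function.ne_iff.mp hα
  have hbound : ∀ i, |x i| ≤ 1 := fun i => le_trans (norm_le_pi_norm x i) hx
  calc |∏ j, x j ^ α j| = ∏ i, |x i| ^ α i := by
        rw [abs_prod]; exact Finset.prod_congr rfl fun i _ => abs_pow _ _
    _ = |x j| ^ α j * ∏ i ∈ univ.erase j, |x i| ^ α i :=
        (Finset.mul_prod_erase _ _ (mem_univ j)).symm
    _ ≤ ‖x‖ * 1 := by
        apply mul_le_mul ?_ ?_ (Finset.prod_nonneg fun i _ => pow_nonneg (abs_nonneg _) _)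
          (norm_nonneg x)
        · calc |x j| ^ α j ≤ |x j| ^ 1 :=
                pow_le_pow_of_le_one (abs_nonneg _) (hbound j) (Nat.one_le_iff_ne_zero.mpr hj)
            _ = |x j| := pow_one _
            _ ≤ ‖x‖ := norm_le_pi_norm x j
        · exact Finset.prod_le_one (fun i _ => pow_nonneg (abs_nonneg _) _)
            (fun i _ => pow_le_one₀ (abs_nonneg _) (hbound i))
    _ = ‖x‖ := mul_one _



/-- Computation (4.5) concluding Lemma 4.4: for
`H(x,y) = Σ_{i≤d-2} cᵢ*(x) yⁱ/i! + c_d(x) y^d ρ(x, x^α y)` with `α ≠ 0`, `c_d(0) ≠ 0`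
and `ρ` smooth near `{0} × ℝ` with `ρ(0,0) ≠ 0`, for every `y₀ ≠ 0` one has
`(∂^{d-1}H/∂y^{d-1})(x,y) = c_d(x)·y·τ(x, x^α y)` near `(0,y₀)` with `τ` smooth,
`τ(0,0) ≠ 0`; in particular `(∂^{d-1}H/∂y^{d-1})(0,y₀) ≠ 0`, so `H` is `y`-regular of
order at most `d-1` at `(0,y₀)`. -/
theorem yregular_away_from_zero_of_taylor_form
    (n : ℕ) (d : ℕ) (hd : 2 ≤ d)
    (cstar : ℕ → (Fin n → ℝ) → ℝ)
    (hcstar : ∀ i < d - 1, AnalyticAt ℝ (cstar i) (0 : Fin n → ℝ))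
    (cd : (Fin n → ℝ) → ℝ) (hcd : AnalyticAt ℝ cd (0 : Fin n → ℝ))
    (hcd0 : cd 0 ≠ 0)
    (α : Fin n → ℕ) (hα : α ≠ 0)
    (ρ : (Fin n → ℝ) × ℝ → ℝ)
    (W : Set ((Fin n → ℝ) × ℝ)) (hWopen : IsOpen W)
    (hWsub : {(0 : Fin n → ℝ)} ×ˢ (Set.univ : Set ℝ) ⊆ W)
    (hρ : ContDiffOn ℝ (⊤ : ℕ∞) ρ W) (hρ0 : ρ (0, 0) ≠ 0)
    (H : (Fin n → ℝ) × ℝ → ℝ)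
    (hH : ∀ p : (Fin n → ℝ) × ℝ,
      H p = (∑ i ∈ Finset.range (d - 1), cstar i p.1 * p.2 ^ i / (Nat.factorial i)) +
        cd p.1 * p.2 ^ d * ρ (p.1, (∏ j, p.1 j ^ α j) * p.2)) :
    ∀ y₀ : ℝ, y₀ ≠ 0 →
      ∃ τ : (Fin n → ℝ) × ℝ → ℝ, ∃ W' ∈ nhds ((0, 0) : (Fin n → ℝ) × ℝ),
        ContDiffOn ℝ (⊤ : ℕ∞) τ W' ∧ τ (0, 0) ≠ 0 ∧
        (∃ V ∈ nhds ((0, y₀) : (Fin n → ℝ) × ℝ), ∀ p ∈ V,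
          iteratedDeriv (d - 1) (fun y => H (p.1, y)) p.2 =
            cd p.1 * p.2 * τ (p.1, (∏ j, p.1 j ^ α j) * p.2)) ∧
        iteratedDeriv (d - 1) (fun y => H (0, y)) y₀ ≠ 0 := by
  intro y₀ hy₀
  -- the product neighbourhood inside W
  have hW00 : W ∈ nhds ((0 : Fin n → ℝ), (0 : ℝ)) :=
    hWopen.mem_nhds (hWsub (by simp))
  obtain ⟨ε, hε, hball⟩ := Metric.mem_nhds_iff.mp hW00
  have hWmem : ∀ (x : Fin n → ℝ) (z : ℝ), ‖x‖ < ε → |z| < ε → (x, z) ∈ W := by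
    intro x z hx hz
    apply hball
    rw [Metric.mem_ball, Prod.dist_eq]
    simp only [dist_zero_right, Real.norm_eq_abs] at *
    exact max_lt hx hz
  -- choice of δ
  set B : ℝ := |y₀| + 1 with hB
  have hBpos : 0 < B := by positivity
  set δ : ℝ := min 1 (min ε (ε / B)) with hδdef
  have hδpos : 0 < δ := by
    apply lt_min one_pos (lt_min hε (by positivity))
  set M : (Fin n → ℝ) → ℝ := fun x => ∏ j, x j ^ α j with hM
  -- membership: for x, y in our balls, (x, M x * y) ∈ W
  have hmemW : ∀ x ∈ Metric.ball (0 : Fin n → ℝ) δ, ∀ y ∈ Metric.ball y₀ 1,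
      (x, M x * y) ∈ W := by
    intro x hx y hy
    rw [Metric.mem_ball, dist_zero_right] at hx
    rw [Metric.mem_ball, Real.dist_eq] at hy
    have hx1 : ‖x‖ ≤ 1 := le_of_lt (lt_of_lt_of_le hx (min_le_left _ _))
    have hxe : ‖x‖ < ε := lt_of_lt_of_le hx (le_trans (min_le_right _ _) (min_le_left _ _))
    have hxB : ‖x‖ < ε / B := lt_of_lt_of_le hx (le_trans (min_le_right _ _) (min_le_right _ _))
    have hyB : |y| ≤ B := by
      have := abs_sub_abs_le_abs_sub y y₀
      rw [hB]; linarith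
    apply hWmem x _ hxe
    calc |M x * y| = |M x| * |y| := abs_mul _ _
      _ ≤ ‖x‖ * B := mul_le_mul (prodBoundAux α hα x hx1) hyB (abs_nonneg _) (norm_nonneg _)
      _ < (ε / B) * B := by exact mul_lt_mul_of_pos_right hxB hBpos
      _ = ε := by field_simp
  -- smoothness of the sigAux family
  have hsig := sigAux_smooth n d ρ W hWopen hρ
  -- key induction
  have key : ∀ k, k ≤ d - 1 → ∀ x ∈ Metric.ball (0 : Fin n → ℝ) δ, ∀ y ∈ Metric.ball y₀ 1,
      iteratedDeriv k (fun y => H (x, y)) y =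
        (∑ i ∈ Finset.range (d - 1 - k), cstar (i + k) x * y ^ i / (Nat.factorial i)) +
          cd x * y ^ (d - k) * sigAux n d ρ k (x, M x * y) := by
    intro k
    induction k with
    | zero =>
      intro _ x hx y hy
      simp only [iteratedDeriv_zero]
      rw [hH (x, y)]
      simp [sigAux, hM]
    | succ k ih =>
      intro hk x hx y hy
      have hk' : k ≤ d - 1 := by omega
      rw [iteratedDeriv_succ]
      have hev : (iteratedDeriv k fun y => H (x, y)) =ᶠ[nhds y]
          (fun y' => (∑ i ∈ Finset.range (d - 1 - k), cstar (i + k) x * y' ^ i / (Nat.factorial i)) +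
            cd x * y' ^ (d - k) * sigAux n d ρ k (x, M x * y')) := by
        filter_upwards [Metric.isOpen_ball.mem_nhds hy] with y' hy'
        exact ih hk' x hx y' hy'
      rw [hev.deriv_eq]
      -- derivative of the polynomial part
      have h1 : HasDerivAt (fun y' : ℝ => ∑ i ∈ Finset.range (d - 1 - k),
          cstar (i + k) x * y' ^ i / (Nat.factorial i))
          (∑ i ∈ Finset.range (d - 1 - k),
            cstar (i + k) x * ((i : ℝ) * y ^ (i - 1)) / (Nat.factorial i)) y := by
        apply HasDerivAt.fun_sum
        intro i _
        exact ((hasDerivAt_pow i y).const_mul (cstar (i + k) x)).div_const _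
      -- derivative of the remainder part
      have hq : (x, M x * y) ∈ W := hmemW x hx y hy
      have hdiff : DifferentiableAt ℝ (sigAux n d ρ k) (x, M x * y) :=
        ((hsig k).contDiffAt (hWopen.mem_nhds hq)).differentiableAt (by simp)
      have hb : HasDerivAt (fun y' => sigAux n d ρ k (x, M x * y'))
          (M x * (fderiv ℝ (sigAux n d ρ k) (x, M x * y)) (0, 1)) y :=
        chainAux _ x (M x) y hdiff
      have ha : HasDerivAt (fun y' : ℝ => cd x * y' ^ (d - k))
          (cd x * (((d - k : ℕ) : ℝ) * y ^ (d - k - 1))) y :=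
        (hasDerivAt_pow (d - k) y).const_mul (cd x)
      have h2 := ha.fun_mul hb
      have htot := h1.fun_add h2
      rw [htot.deriv]
      -- now identify with the target
      have hsum : (∑ i ∈ Finset.range (d - 1 - k),
            cstar (i + k) x * ((i : ℝ) * y ^ (i - 1)) / (Nat.factorial i)) =
          ∑ i ∈ Finset.range (d - 1 - (k + 1)), cstar (i + (k + 1)) x * y ^ i / (Nat.factorial i) := by
        have hm : d - 1 - k = (d - 1 - (k + 1)) + 1 := by omega
        rw [hm, Finset.sum_range_succ']
        simp only [Nat.cast_zero, zero_mul, mul_zero, zero_div, add_zero]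
        apply Finset.sum_congr rfl
        intro i _
        have hfac : ((Nat.factorial (i + 1) : ℝ)) = ((i : ℝ) + 1) * (Nat.factorial i : ℝ) := by
          rw [Nat.factorial_succ]; push_cast; ring
        have hne : ((i : ℝ) + 1) ≠ 0 := by positivity
        have hfne : ((Nat.factorial i : ℝ)) ≠ 0 := by
          exact_mod_cast Nat.factorial_ne_zero i
        rw [hfac]
        push_cast
        field_simp
        ring
      have hrem : cd x * (((d - k : ℕ) : ℝ) * y ^ (d - k - 1)) * sigAux n d ρ k (x, M x * y) +
            (cd x * y ^ (d - k)) * (M x * (fderiv ℝ (sigAux n d ρ k) (x, M x * y)) (0, 1)) =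
          cd x * y ^ (d - (k + 1)) * sigAux n d ρ (k + 1) (x, M x * y) := by
        have hdk : d - k = (d - (k + 1)) + 1 := by omega
        have hdk1 : d - k - 1 = d - (k + 1) := by omega
        have hcast : ((d - k : ℕ) : ℝ) = ((d - (k + 1) + 1 : ℕ) : ℝ) := by rw [← hdk]
        show _ = cd x * y ^ (d - (k + 1)) *
          (((d - k : ℕ) : ℝ) * sigAux n d ρ k (x, M x * y) +
            (M x * y) * (fderiv ℝ (sigAux n d ρ k) (x, M x * y)) (0, 1))
        rw [hdk1, hdk, pow_succ]
        ring
      rw [hsum, hrem]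
    -- end induction
  -- conclusion
  refine ⟨sigAux n d ρ (d - 1), W, hW00, hsig (d - 1), sigAux_ne_zero n d ρ hρ0 (d - 1) le_rfl,
    ⟨Metric.ball (0 : Fin n → ℝ) δ ×ˢ Metric.ball y₀ 1,
      prod_mem_nhds (Metric.ball_mem_nhds _ hδpos) (Metric.ball_mem_nhds _ one_pos), ?_⟩, ?_⟩
  · intro p hp
    obtain ⟨hp1, hp2⟩ := hp
    have := key (d - 1) le_rfl p.1 hp1 p.2 hp2
    rw [this]
    have h0 : d - 1 - (d - 1) = 0 := by omega
    have h1 : d - (d - 1) = 1 := by omega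
    rw [h0, h1]
    simp [hM]
  · have h0 : (0 : Fin n → ℝ) ∈ Metric.ball (0 : Fin n → ℝ) δ := Metric.mem_ball_self hδpos
    have hy : y₀ ∈ Metric.ball y₀ 1 := Metric.mem_ball_self one_pos
    have := key (d - 1) le_rfl 0 h0 y₀ hy
    rw [this]
    have h0' : d - 1 - (d - 1) = 0 := by omega
    have h1' : d - (d - 1) = 1 := by omega
    rw [h0', h1']
    have hM0 : M 0 = 0 := by
      obtain ⟨j, hj⟩ := Function.ne_iff.mp hα
      rw [hM]
      exact Finset.prod_eq_zero (mem_univ j) (by simp [zero_pow hj])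
    rw [hM0]
    simp only [Finset.range_zero, Finset.sum_empty, zero_add, pow_one, zero_mul]
    exact mul_ne_zero (mul_ne_zero hcd0 hy₀) (sigAux_ne_zero n d ρ hρ0 (d - 1) le_rfl)
end
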